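/- arXiv:1410.5766 — 6 statements merged into one kernel-verified Lean document; each statement's English description precedes it below -/
import Mathlib

section
/- Let h > 0, q₀, v₀, q₁, v₁ ∈ ℝⁿ, and let q(t) be the unique cubic polynomial with q(0)=q₀, q'(0)=v₀, q(h)=q₁, q'(h)=v₁. Then ∫₀ʰ ½‖q''(t)‖² dt = (6/h³)‖q₀ - q₁‖² + (6/h²)⟨q₀ - q₁, v₀ + v₁⟩ + (2/h)(‖v₀‖² + ⟨v₀, v₁⟩ + ‖v₁‖²). -/
open scoped RealInnerProductSpace

/-!
The second derivative `t • 6a + 2b` of the cubic is affine in `t`, so the action integrates to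
the quadratic form `6h³‖a‖² + 6h²⟪a, b⟫ + 2h‖b‖²` in `(a, b)`. Since `d = q₀`, `c = v₀`, and
`q₁`, `v₁` are explicit in `(a, b, c, d)`, the claimed form in `(q₀ - q₁, v₀, v₁)` reduces to this
one by expanding inner products.
-/

section Derivatives

variable {E : Type*} [NormedAddCommGroup E] [NormedSpace ℝ E]

theorem hasDerivAt_quadratic_smul (a b c : E) (t : ℝ) :
    HasDerivAt (fun t : ℝ => t ^ 2 • a + t • b + c) (t • (2 : ℝ) • a + b) t := by
  convert (((hasDerivAt_pow 2 t).smul_const a).add ((hasDerivAt_id t).smul_const b)).add_const c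
    using 1
  norm_num
  module

theorem hasDerivAt_cubic_smul (a b c d : E) (t : ℝ) :
    HasDerivAt (fun t : ℝ => t ^ 3 • a + t ^ 2 • b + t • c + d)
      (t ^ 2 • (3 : ℝ) • a + t • (2 : ℝ) • b + c) t := by
  convert ((((hasDerivAt_pow 3 t).smul_const a).add ((hasDerivAt_pow 2 t).smul_const b)).add
    ((hasDerivAt_id t).smul_const c)).add_const d using 1
  norm_num
  module

theorem deriv_deriv_cubic_smul (a b c d : E) :
    deriv (deriv fun t : ℝ => t ^ 3 • a + t ^ 2 • b + t • c + d) =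
      fun t => t • (6 : ℝ) • a + (2 : ℝ) • b := by
  have hderiv : deriv (fun t : ℝ => t ^ 3 • a + t ^ 2 • b + t • c + d) =
      fun t => t ^ 2 • (3 : ℝ) • a + t • (2 : ℝ) • b + c :=
    funext fun t => (hasDerivAt_cubic_smul a b c d t).deriv
  funext t
  rw [hderiv, (hasDerivAt_quadratic_smul _ _ c t).deriv]
  module

end Derivatives

section InnerProduct

variable {E : Type*} [NormedAddCommGroup E] [InnerProductSpace ℝ E]

theorem norm_smul_add_sq (t : ℝ) (u w : E) :
    ‖t • u + w‖ ^ 2 = t ^ 2 * ‖u‖ ^ 2 + 2 * t * ⟪u, w⟫ + ‖w‖ ^ 2 := by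
  rw [norm_add_sq_real, norm_smul, mul_pow, Real.norm_eq_abs, sq_abs, real_inner_smul_left]
  ring

theorem integral_half_norm_sq_smul_add (h : ℝ) (u w : E) :
    ∫ t in (0 : ℝ)..h, (1 / 2 : ℝ) * ‖t • u + w‖ ^ 2 =
      h ^ 3 / 6 * ‖u‖ ^ 2 + h ^ 2 / 2 * ⟪u, w⟫ + h / 2 * ‖w‖ ^ 2 := by
  have hF : ∀ t ∈ Set.uIcc 0 h, HasDerivAt
      (fun t => t ^ 3 / 6 * ‖u‖ ^ 2 + t ^ 2 / 2 * ⟪u, w⟫ + t / 2 * ‖w‖ ^ 2)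
      ((1 / 2 : ℝ) * ‖t • u + w‖ ^ 2) t := by
    intro t _
    refine ((((hasDerivAt_pow 3 t).div_const 6).mul_const _).add
      (((hasDerivAt_pow 2 t).div_const 2).mul_const _)).add
      (((hasDerivAt_id t).div_const 2).mul_const _) |>.congr_deriv ?_
    rw [norm_smul_add_sq]
    norm_num
    ring
  rw [intervalIntegral.integral_eq_sub_of_hasDerivAt hF
    (Continuous.intervalIntegrable (by fun_prop) _ _)]
  ring

theorem cubic_energy_eq_boundary_form {h : ℝ} (hh : h ≠ 0) (a b c d : E) :
    h ^ 3 / 6 * ‖(6 : ℝ) • a‖ ^ 2 + h ^ 2 / 2 * ⟪(6 : ℝ) • a, (2 : ℝ) • b⟫ +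
        h / 2 * ‖(2 : ℝ) • b‖ ^ 2 =
      6 / h ^ 3 * ‖d - (h ^ 3 • a + h ^ 2 • b + h • c + d)‖ ^ 2 +
        6 / h ^ 2 * ⟪d - (h ^ 3 • a + h ^ 2 • b + h • c + d),
          c + (h ^ 2 • (3 : ℝ) • a + h • (2 : ℝ) • b + c)⟫ +
        2 / h * (‖c‖ ^ 2 + ⟪c, h ^ 2 • (3 : ℝ) • a + h • (2 : ℝ) • b + c⟫ +
          ‖h ^ 2 • (3 : ℝ) • a + h • (2 : ℝ) • b + c‖ ^ 2) := by
  rw [sub_add_cancel_right]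
  simp only [← real_inner_self_eq_norm_sq, inner_add_left, inner_add_right, inner_neg_left,
    inner_neg_right, real_inner_smul_left, real_inner_smul_right, real_inner_comm b a,
    real_inner_comm c a, real_inner_comm c b]
  field_simp
  ring

end InnerProduct

/-- The exact discrete Lagrangian for `L(q,q̇,q̈) = ½‖q̈‖²`: the action of the cubic
interpolant with boundary data `(q₀,v₀,q₁,v₁)` on `[0,h]` equals
`(6/h³)‖q₀-q₁‖² + (6/h²)⟨q₀-q₁, v₀+v₁⟩ + (2/h)(‖v₀‖² + ⟨v₀,v₁⟩ + ‖v₁‖²)`. -/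
theorem exact_discrete_lagrangian_cubic (n : ℕ) (h : ℝ) (hh : 0 < h)
    (a b c d q₀ v₀ q₁ v₁ : EuclideanSpace ℝ (Fin n))
    (q : ℝ → EuclideanSpace ℝ (Fin n))
    (hq : ∀ t : ℝ, q t = t ^ 3 • a + t ^ 2 • b + t • c + d)
    (h0 : q 0 = q₀) (hd0 : deriv q 0 = v₀)
    (h1 : q h = q₁) (hd1 : deriv q h = v₁) :
    (∫ t in (0 : ℝ)..h, (1 / 2 : ℝ) * ‖deriv (deriv q) t‖ ^ 2) =
      (6 / h ^ 3) * ‖q₀ - q₁‖ ^ 2 + (6 / h ^ 2) * ⟪q₀ - q₁, v₀ + v₁⟫ +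
        (2 / h) * (‖v₀‖ ^ 2 + ⟪v₀, v₁⟫ + ‖v₁‖ ^ 2) := by
  obtain rfl : q = fun t => t ^ 3 • a + t ^ 2 • b + t • c + d := funext hq
  have hq₀ : q₀ = d := by simp [← h0]
  have hv₀ : v₀ = c := by simp [← hd0, (hasDerivAt_cubic_smul a b c d 0).deriv]
  rw [deriv_deriv_cubic_smul, integral_half_norm_sq_smul_add, ← h1, ← hd1,
    (hasDerivAt_cubic_smul a b c d h).deriv, hq₀, hv₀]
  exact cubic_energy_eq_boundary_form hh.ne' a b c d
end

section
/- Let h > 0 and define the discrete flow on (ℝⁿ × ℝⁿ) × (ℝⁿ × ℝⁿ) by q_{k+1} = q_{k-1} + 2h v_k and v_{k+1} = v_{k-1} + 4(v_k - (q_k - q_{k-1})/h). Then the quantity φ(q_k, v_k, q_{k+1}, v_{k+1}) = (q_{k+1} - q_k)/h - (v_k + v_{k+1})/2 is preserved by the flow, i.e. φ(q_{k+1}, v_{k+1}, q_{k+2}, v_{k+2}) = φ(q_k, v_k, q_{k+1}, v_{k+1}). -/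
/-- The quantity `φ(q_k,v_k,q_{k+1},v_{k+1}) = (q_{k+1}-q_k)/h - (v_k+v_{k+1})/2` is
preserved by the discrete flow `q_{k+1} = q_{k-1} + 2h v_k`,
`v_{k+1} = v_{k-1} + 4(v_k - (q_k - q_{k-1})/h)`. -/
theorem discrete_flow_conserved_quantity (n : ℕ) (h : ℝ) (hh : 0 < h)
    (q₀ v₀ q₁ v₁ q₂ v₂ : EuclideanSpace ℝ (Fin n))
    (hq : q₂ = q₀ + (2 * h) • v₁)
    (hv : v₂ = v₀ + (4 : ℝ) • (v₁ - (1 / h) • (q₁ - q₀))) :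
    (1 / h) • (q₂ - q₁) - (1 / 2 : ℝ) • (v₁ + v₂) =
      (1 / h) • (q₁ - q₀) - (1 / 2 : ℝ) • (v₀ + v₁) := by
  subst hq hv
  have h0 : h ≠ 0 := ne_of_gt hh
  have : (1 / h) * (2 * h) = 2 := by field_simp
  simp only [smul_sub, smul_add, smul_smul, this]
  module
end

section
/- Let h > 0 and define the discrete flow on (ℝⁿ × ℝⁿ) × (ℝⁿ × ℝⁿ) by q_{k+1} = 5q_{k-1} − 4q_k + 2h(v_{k-1} + 2v_k) and v_{k+1} = v_{k-1} + (2/h)(q_{k-1} − 2q_k + q_{k+1}). Then the quantity φ(q_k, v_k, q_{k+1}, v_{k+1}) = (q_{k+1} − q_k)/h − (v_k + v_{k+1})/2 is preserved by this flow. -/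
/-- The quantity `φ(q_k,v_k,q_{k+1},v_{k+1}) = (q_{k+1}-q_k)/h - (v_k+v_{k+1})/2` is
preserved by the exact discrete flow `q_{k+1} = 5q_{k-1} - 4q_k + 2h(v_{k-1}+2v_k)`,
`v_{k+1} = v_{k-1} + (2/h)(q_{k-1} - 2q_k + q_{k+1})`. -/
theorem exact_discrete_flow_conserved_quantity (n : ℕ) (h : ℝ) (hh : 0 < h)
    (q₀ v₀ q₁ v₁ q₂ v₂ : EuclideanSpace ℝ (Fin n))
    (hq : q₂ = (5 : ℝ) • q₀ - (4 : ℝ) • q₁ + (2 * h) • (v₀ + (2 : ℝ) • v₁))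
    (hv : v₂ = v₀ + (2 / h) • (q₀ - (2 : ℝ) • q₁ + q₂)) :
    (1 / h) • (q₂ - q₁) - (1 / 2 : ℝ) • (v₁ + v₂) =
      (1 / h) • (q₁ - q₀) - (1 / 2 : ℝ) • (v₀ + v₁) := by
  subst hq hv
  have hne : h ≠ 0 := hh.ne'
  ext i
  simp only [PiLp.sub_apply, PiLp.add_apply, PiLp.smul_apply, smul_eq_mul]
  field_simp
  ring
end

section
/- With notation as above, suppose 𝔽⁻L_d is a diffeomorphism onto its image and define the discrete Hamiltonian flow F̃ = 𝔽⁻L_d ∘ F ∘ (𝔽⁻L_d)⁻¹. Then also F̃ = 𝔽⁺L_d ∘ F ∘ (𝔽⁺L_d)⁻¹ = 𝔽⁺L_d ∘ (𝔽⁻L_d)⁻¹ on the appropriate domains. -/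
/-- Equivalence of the definitions of the discrete Hamiltonian flow:
if `𝔽⁻L_d` and `𝔽⁺L_d` are invertible on their images (with inverses `Gm`, `Gp`) and
`𝔽⁺L_d = 𝔽⁻L_d ∘ F`, then on the appropriate domains
`𝔽⁻L_d ∘ F ∘ (𝔽⁻L_d)⁻¹ = 𝔽⁺L_d ∘ F ∘ (𝔽⁺L_d)⁻¹ = 𝔽⁺L_d ∘ (𝔽⁻L_d)⁻¹`. -/
theorem discrete_hamiltonian_flow_equiv (m : ℕ)
    (Fm Fp : EuclideanSpace ℝ (Fin m) × EuclideanSpace ℝ (Fin m) →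
      EuclideanSpace ℝ (Fin m) × (EuclideanSpace ℝ (Fin m) →L[ℝ] ℝ))
    (F : EuclideanSpace ℝ (Fin m) × EuclideanSpace ℝ (Fin m) →
      EuclideanSpace ℝ (Fin m) × EuclideanSpace ℝ (Fin m))
    (Gm Gp : EuclideanSpace ℝ (Fin m) × (EuclideanSpace ℝ (Fin m) →L[ℝ] ℝ) →
      EuclideanSpace ℝ (Fin m) × EuclideanSpace ℝ (Fin m))
    (hGm : ∀ x, Gm (Fm x) = x)
    (hGp : ∀ x, Gp (Fp x) = x)
    (hrel : ∀ x, Fp x = Fm (F x)) :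
    ∀ x : EuclideanSpace ℝ (Fin m) × EuclideanSpace ℝ (Fin m),
      Fm (F (Gm (Fp x))) = Fp (F (Gp (Fp x))) ∧
      Fm (F (Gm (Fp x))) = Fp (Gm (Fp x)) := by
  intro x
  have h1 : Gm (Fp x) = F x := by rw [hrel, hGm]
  constructor
  · rw [h1, hGp, hrel]
  · rw [h1, hrel]
end

section
/- Let L(q, q̇, q̈) = ½‖q̈‖² on ℝⁿ and let q : [0,h] → ℝⁿ be the cubic solution of q⁗ = 0 with boundary data (q₀,v₀,q₁,v₁). Then the partial derivative of the exact discrete Lagrangian L_d^e with respect to v₀ satisfies ∂L_d^e/∂v₀ = −q''(0), and the partial derivative with respect to v₁ satisfies ∂L_d^e/∂v₁ = q''(h), where L_d^e(q₀,v₀,q₁,v₁) = (6/h³)‖q₀−q₁‖² + (6/h²)⟨q₀−q₁, v₀+v₁⟩ + (2/h)(‖v₀‖²+⟨v₀,v₁⟩+‖v₁‖²). -/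
open scoped RealInnerProductSpace

section Aux

variable {E : Type*} [NormedAddCommGroup E] [InnerProductSpace ℝ E] [CompleteSpace E]

lemma grad_quad_aux (A α β K : ℝ) (c w x : E) :
    HasGradientAt (fun v : E => A + α * ⟪c, v⟫ + β * (‖v‖ ^ 2 + ⟪v, w⟫ + K))
      (α • c + β • ((2:ℝ) • x + w)) x := by
  rw [hasGradientAt_iff_hasFDerivAt]
  have hinner : ∀ y : E, HasFDerivAt (fun v : E => ⟪y, v⟫) (innerSL ℝ y) x :=
    fun y => (innerSL ℝ y).hasFDerivAt
  have hsq : HasFDerivAt (fun v : E => ‖v‖ ^ 2)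
      ((2:ℝ) • (innerSL ℝ x : E →L[ℝ] ℝ)) x := by
    have h2 := (hasFDerivAt_id x).inner ℝ (hasFDerivAt_id x)
    refine (h2.congr_fderiv ?_).congr_of_eventuallyEq (by
      filter_upwards with v; simp [real_inner_self_eq_norm_sq])
    ext y
    simp [fderivInnerCLM, real_inner_comm]
    ring
  have hw : HasFDerivAt (fun v : E => ⟪v, w⟫) (innerSL ℝ w : E →L[ℝ] ℝ) x := by
    refine (hinner w).congr_of_eventuallyEq ?_
    filter_upwards with v; rw [real_inner_comm]
  have key := ((hasFDerivAt_const A x).add ((hinner c).const_mul α)).add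
    (((hsq.add hw).add (hasFDerivAt_const K x)).const_mul β)
  refine key.congr_fderiv ?_
  ext y
  simp [InnerProductSpace.toDual, real_inner_smul_left, inner_add_left]

lemma cubic_hasDerivAt (a b c d : E) (t : ℝ) :
    HasDerivAt (fun t : ℝ => t ^ 3 • a + t ^ 2 • b + t • c + d)
      ((3 * t ^ 2) • a + (2 * t) • b + c) t := by
  have h3 : HasDerivAt (fun t : ℝ => t ^ 3 • a) ((3 * t ^ 2) • a) t := by
    simpa using (hasDerivAt_pow 3 t).smul_const a
  have h2 : HasDerivAt (fun t : ℝ => t ^ 2 • b) ((2 * t) • b) t := by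
    simpa using (hasDerivAt_pow 2 t).smul_const b
  have h1 : HasDerivAt (fun t : ℝ => t • c) c t := by
    simpa using (hasDerivAt_id t).smul_const c
  simpa using ((h3.add h2).add h1).add_const d

end Aux

/-- Matching of discrete and continuous Legendre transforms for cubic splines:
for the exact discrete Lagrangian of `L(q,q̇,q̈) = ½‖q̈‖²`, the gradient with respect to
`v₀` equals `-q''(0)` and the gradient with respect to `v₁` equals `q''(h)`, where `q`
is the cubic interpolant of the boundary data. -/
theorem exact_discrete_legendre_match (n : ℕ) (h : ℝ) (hh : 0 < h)
    (q₀ v₀ q₁ v₁ a b c d : EuclideanSpace ℝ (Fin n))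
    (q : ℝ → EuclideanSpace ℝ (Fin n))
    (hq : ∀ t : ℝ, q t = t ^ 3 • a + t ^ 2 • b + t • c + d)
    (h0 : q 0 = q₀) (hd0 : deriv q 0 = v₀)
    (h1 : q h = q₁) (hd1 : deriv q h = v₁) :
    gradient (fun v : EuclideanSpace ℝ (Fin n) =>
        (6 / h ^ 3) * ‖q₀ - q₁‖ ^ 2 + (6 / h ^ 2) * ⟪q₀ - q₁, v + v₁⟫ +
          (2 / h) * (‖v‖ ^ 2 + ⟪v, v₁⟫ + ‖v₁‖ ^ 2)) v₀ =
      -(iteratedDeriv 2 q 0) ∧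
    gradient (fun v : EuclideanSpace ℝ (Fin n) =>
        (6 / h ^ 3) * ‖q₀ - q₁‖ ^ 2 + (6 / h ^ 2) * ⟪q₀ - q₁, v₀ + v⟫ +
          (2 / h) * (‖v₀‖ ^ 2 + ⟪v₀, v⟫ + ‖v‖ ^ 2)) v₁ =
      iteratedDeriv 2 q h := by
  -- derivative of the cubic
  have hderiv : deriv q = fun t : ℝ => (3 * t ^ 2) • a + (2 * t) • b + c := by
    funext t
    have : HasDerivAt q ((3 * t ^ 2) • a + (2 * t) • b + c) t := by
      have := cubic_hasDerivAt a b c d t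
      refine this.congr_of_eventuallyEq ?_
      filter_upwards with s using (hq s)
    exact this.deriv
  -- second derivative
  have hderiv2 : ∀ t : ℝ, iteratedDeriv 2 q t = (6 * t) • a + (2:ℝ) • b := by
    intro t
    have h2 : HasDerivAt (deriv q) ((6 * t) • a + (2:ℝ) • b) t := by
      rw [hderiv]
      have h' := cubic_hasDerivAt (0 : EuclideanSpace ℝ (Fin n)) ((3:ℝ) • a) ((2:ℝ) • b) c t
      have hfun : (fun s : ℝ => (3 * s ^ 2) • a + (2 * s) • b + c) =
          fun s : ℝ => s ^ 3 • (0 : EuclideanSpace ℝ (Fin n)) + s ^ 2 • ((3:ℝ) • a) + s • ((2:ℝ) • b) + c := by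
        funext s; module
      have hval : (3 * t ^ 2) • (0 : EuclideanSpace ℝ (Fin n)) + (2 * t) • ((3:ℝ) • a) + (2:ℝ) • b =
          (6 * t) • a + (2:ℝ) • b := by module
      rw [hfun, ← hval]; exact h' 
    rw [show (2:ℕ) = 1 + 1 from rfl, iteratedDeriv_succ, iteratedDeriv_one]
    exact h2.deriv
  -- boundary relations
  have hc : c = v₀ := by
    rw [hderiv] at hd0; simpa using hd0
  have hdq : d = q₀ := by
    rw [hq 0] at h0; simpa using h0
  have hq1 : h ^ 3 • a + h ^ 2 • b + h • v₀ + q₀ = q₁ := by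
    rw [hq h] at h1; rw [← hc, ← hdq]; exact h1
  have hv1 : (3 * h ^ 2) • a + (2 * h) • b + v₀ = v₁ := by
    rw [hderiv] at hd1; rw [← hc]; exact hd1
  have hne : h ≠ 0 := ne_of_gt hh
  constructor
  · have key := grad_quad_aux ((6 / h ^ 3) * ‖q₀ - q₁‖ ^ 2 + (6 / h ^ 2) * ⟪q₀ - q₁, v₁⟫)
      (6 / h ^ 2) (2 / h) (‖v₁‖ ^ 2) (q₀ - q₁) v₁ v₀
    have heq : (fun v : EuclideanSpace ℝ (Fin n) =>
        (6 / h ^ 3) * ‖q₀ - q₁‖ ^ 2 + (6 / h ^ 2) * ⟪q₀ - q₁, v + v₁⟫ +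
          (2 / h) * (‖v‖ ^ 2 + ⟪v, v₁⟫ + ‖v₁‖ ^ 2)) =
        (fun v : EuclideanSpace ℝ (Fin n) =>
          ((6 / h ^ 3) * ‖q₀ - q₁‖ ^ 2 + (6 / h ^ 2) * ⟪q₀ - q₁, v₁⟫) +
            (6 / h ^ 2) * ⟪q₀ - q₁, v⟫ + (2 / h) * (‖v‖ ^ 2 + ⟪v, v₁⟫ + ‖v₁‖ ^ 2)) := by
      funext v; rw [inner_add_right]; ring
    rw [heq, key.gradient, hderiv2 0, ← hq1, ← hv1]
    match_scalars <;> field_simp <;> ring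
  · have key := grad_quad_aux ((6 / h ^ 3) * ‖q₀ - q₁‖ ^ 2 + (6 / h ^ 2) * ⟪q₀ - q₁, v₀⟫)
      (6 / h ^ 2) (2 / h) (‖v₀‖ ^ 2) (q₀ - q₁) v₀ v₁
    have heq : (fun v : EuclideanSpace ℝ (Fin n) =>
        (6 / h ^ 3) * ‖q₀ - q₁‖ ^ 2 + (6 / h ^ 2) * ⟪q₀ - q₁, v₀ + v⟫ +
          (2 / h) * (‖v₀‖ ^ 2 + ⟪v₀, v⟫ + ‖v‖ ^ 2)) =
        (fun v : EuclideanSpace ℝ (Fin n) =>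
          ((6 / h ^ 3) * ‖q₀ - q₁‖ ^ 2 + (6 / h ^ 2) * ⟪q₀ - q₁, v₀⟫) +
            (6 / h ^ 2) * ⟪q₀ - q₁, v⟫ + (2 / h) * (‖v‖ ^ 2 + ⟪v, v₀⟫ + ‖v₀‖ ^ 2)) := by
      funext v; rw [inner_add_right, real_inner_comm v₀ v]; ring
    rw [heq, key.gradient, hderiv2 h, ← hq1, ← hv1]
    match_scalars <;> field_simp <;> ring
end

section
/- Let h > 0 and consider the linear map T : ℝⁿ × ℝⁿ × ℝⁿ × ℝⁿ → ℝⁿ × ℝⁿ × ℝⁿ × ℝⁿ given by T(q₀,v₀,q₁,v₁) = (q₁, v₁, 5q₀ − 4q₁ + 2h(v₀ + 2v₁), v₀ + (2/h)(q₀ − 2q₁ + (5q₀ − 4q₁ + 2h(v₀ + 2v₁)))). Then T is a linear isomorphism, and the standard symplectic-type two-form Ω on ℝⁿ×ℝⁿ×ℝⁿ×ℝⁿ pulled back from T*(ℝⁿ×ℝⁿ) via the discrete Legendre transform of L_d^e is preserved by T; concretely, writing p_k = −D₁L_d^e(q_k,v_k,q_{k+1},v_{k+1}), p̃_k = −D₂L_d^e(q_k,v_k,q_{k+1},v_{k+1}),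 p_{k+1} = D₃L_d^e, p̃_{k+1} = D₄L_d^e, one has dq_{k+1}∧dp_{k+1} + dv_{k+1}∧dp̃_{k+1} = dq_k∧dp_k + dv_k∧dp̃_k. For n = 1, verify that the Jacobian of the induced map (q_k, v_k, p_k, p̃_k) ↦ (q_{k+1}, v_{k+1}, p_{k+1}, p̃_{k+1}) is a symplectic 4×4 matrix. -/
/-!
The step `T` is time-reversible: solved for `(q₀, v₀)`, the recursion is the same recursion
with step `-h` and the two time slices exchanged, which gives the inverse of `T`.
The discrete Legendre transforms of the quadratic `L_d^e` are linear, and eliminating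
`(q₁, v₁)` shows that the momentum map is the exponential `exp (h A)` of a nilpotent
Hamiltonian matrix `A`, hence symplectic.
-/

/-- The scalar exact discrete Lagrangian for cubic splines (`n = 1`). -/
noncomputable def LdeScalar (h q₀ v₀ q₁ v₁ : ℝ) : ℝ :=
  6 / h ^ 3 * (q₀ - q₁) ^ 2 + 6 / h ^ 2 * (q₀ - q₁) * (v₀ + v₁) +
    2 / h * (v₀ ^ 2 + v₀ * v₁ + v₁ ^ 2)

/-- The standard symplectic matrix on ℝ⁴ (two degrees of freedom). -/
def Jstd : Matrix (Fin 4) (Fin 4) ℝ :=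
  !![0, 0, 1, 0; 0, 0, 0, 1; -1, 0, 0, 0; 0, -1, 0, 0]

section SplineStep

variable {𝕜 E : Type*} [Field 𝕜] [AddCommGroup E] [Module 𝕜 E]

def splineStep (h : 𝕜) (x : (E × E) × E × E) : (E × E) × E × E :=
  (x.2,
    ((5 : 𝕜) • x.1.1 - (4 : 𝕜) • x.2.1 + (2 * h) • (x.1.2 + (2 : 𝕜) • x.2.2),
     x.1.2 + (2 / h) • (x.1.1 - (2 : 𝕜) • x.2.1 +
       ((5 : 𝕜) • x.1.1 - (4 : 𝕜) • x.2.1 + (2 * h) • (x.1.2 + (2 : 𝕜) • x.2.2)))))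

theorem isLinearMap_splineStep (h : 𝕜) : IsLinearMap 𝕜 (splineStep (E := E) h) where
  map_add x y := by
    simp only [splineStep, Prod.fst_add, Prod.snd_add, Prod.mk_add_mk, Prod.mk.injEq]
    refine ⟨trivial, ?_, ?_⟩ <;> module
  map_smul c x := by
    simp only [splineStep, Prod.smul_fst, Prod.smul_snd, Prod.smul_mk, Prod.mk.injEq]
    refine ⟨trivial, ?_, ?_⟩ <;> module

theorem swap_splineStep_neg_swap_splineStep {h : 𝕜} (hh : h ≠ 0) (x : (E × E) × E × E) :
    (splineStep (-h) (splineStep h x).swap).swap = x := by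
  obtain ⟨⟨q₀, v₀⟩, q₁, v₁⟩ := x
  simp only [splineStep, Prod.swap_prod_mk, Prod.mk.injEq]
  refine ⟨⟨?_, ?_⟩, trivial⟩ <;> match_scalars <;> field_simp <;> ring

theorem splineStep_bijective {h : 𝕜} (hh : h ≠ 0) :
    Function.Bijective (splineStep (E := E) h) := by
  refine Function.bijective_iff_has_inverse.mpr
    ⟨fun y => (splineStep (-h) y.swap).swap, swap_splineStep_neg_swap_splineStep hh, fun y => ?_⟩
  apply Prod.swap_injective
  simpa using swap_splineStep_neg_swap_splineStep (neg_ne_zero.mpr hh) y.swap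

end SplineStep

theorem deriv_quadratic (a b c x : ℝ) :
    deriv (fun t : ℝ => a * t ^ 2 + b * t + c) x = 2 * a * x + b := by
  have hderiv : HasDerivAt (fun t : ℝ => a * t ^ 2 + b * t + c) (a * (2 * x ^ 1) + b * 1) x :=
    (((hasDerivAt_pow 2 x).const_mul a).add ((hasDerivAt_id x).const_mul b)).add_const c
  rw [hderiv.deriv]
  ring

section LdeScalar

variable (h q₀ v₀ q₁ v₁ : ℝ)

theorem deriv_LdeScalar_q₀ :
    deriv (fun x => LdeScalar h x v₀ q₁ v₁) q₀ = 12 / h ^ 3 * (q₀ - q₁) + 6 / h ^ 2 * (v₀ + v₁) := by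
  have hquad : (fun x => LdeScalar h x v₀ q₁ v₁) = fun x => 6 / h ^ 3 * x ^ 2 +
      (6 / h ^ 2 * (v₀ + v₁) - 12 / h ^ 3 * q₁) * x +
      (6 / h ^ 3 * q₁ ^ 2 - 6 / h ^ 2 * q₁ * (v₀ + v₁) + 2 / h * (v₀ ^ 2 + v₀ * v₁ + v₁ ^ 2)) := by
    funext x; unfold LdeScalar; ring
  rw [hquad, deriv_quadratic]; ring

theorem deriv_LdeScalar_v₀ :
    deriv (fun x => LdeScalar h q₀ x q₁ v₁) v₀ = 6 / h ^ 2 * (q₀ - q₁) + 2 / h * (2 * v₀ + v₁) := by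
  have hquad : (fun x => LdeScalar h q₀ x q₁ v₁) = fun x => 2 / h * x ^ 2 +
      (6 / h ^ 2 * (q₀ - q₁) + 2 / h * v₁) * x +
      (6 / h ^ 3 * (q₀ - q₁) ^ 2 + 6 / h ^ 2 * (q₀ - q₁) * v₁ + 2 / h * v₁ ^ 2) := by
    funext x; unfold LdeScalar; ring
  rw [hquad, deriv_quadratic]; ring

theorem deriv_LdeScalar_q₁ :
    deriv (fun x => LdeScalar h q₀ v₀ x v₁) q₁ = -(12 / h ^ 3) * (q₀ - q₁) - 6 / h ^ 2 * (v₀ + v₁) := by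
  have hquad : (fun x => LdeScalar h q₀ v₀ x v₁) = fun x => 6 / h ^ 3 * x ^ 2 +
      (-(12 / h ^ 3) * q₀ - 6 / h ^ 2 * (v₀ + v₁)) * x +
      (6 / h ^ 3 * q₀ ^ 2 + 6 / h ^ 2 * q₀ * (v₀ + v₁) + 2 / h * (v₀ ^ 2 + v₀ * v₁ + v₁ ^ 2)) := by
    funext x; unfold LdeScalar; ring
  rw [hquad, deriv_quadratic]; ring

theorem deriv_LdeScalar_v₁ :
    deriv (fun x => LdeScalar h q₀ v₀ q₁ x) v₁ = 6 / h ^ 2 * (q₀ - q₁) + 2 / h * (v₀ + 2 * v₁) := by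
  have hquad : (fun x => LdeScalar h q₀ v₀ q₁ x) = fun x => 2 / h * x ^ 2 +
      (6 / h ^ 2 * (q₀ - q₁) + 2 / h * v₀) * x +
      (6 / h ^ 3 * (q₀ - q₁) ^ 2 + 6 / h ^ 2 * (q₀ - q₁) * v₀ + 2 / h * v₀ ^ 2) := by
    funext x; unfold LdeScalar; ring
  rw [hquad, deriv_quadratic]; ring

end LdeScalar

/-- `exp (h A)` for `A = !![0, 1, 0, 0; 0, 0, 0, 1; 0, 0, 0, 0; 0, 0, -1, 0]`, with `A ^ 4 = 0`. -/
noncomputable def splineMomentumMatrix (h : ℝ) : Matrix (Fin 4) (Fin 4) ℝ :=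
  !![1, h, -h ^ 3 / 6, h ^ 2 / 2; 0, 1, -h ^ 2 / 2, h; 0, 0, 1, 0; 0, 0, -h, 1]

theorem splineMomentumMatrix_mulVec {h : ℝ} (hh : h ≠ 0) (q₀ v₀ q₁ v₁ : ℝ) :
    (splineMomentumMatrix h).mulVec
        ![q₀, v₀, -(deriv (fun x => LdeScalar h x v₀ q₁ v₁) q₀),
          -(deriv (fun x => LdeScalar h q₀ x q₁ v₁) v₀)] =
      ![q₁, v₁, deriv (fun x => LdeScalar h q₀ v₀ x v₁) q₁,
        deriv (fun x => LdeScalar h q₀ v₀ q₁ x) v₁] := by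
  rw [deriv_LdeScalar_q₀, deriv_LdeScalar_v₀, deriv_LdeScalar_q₁, deriv_LdeScalar_v₁]
  ext i
  fin_cases i <;>
    simp [splineMomentumMatrix, Matrix.mulVec, dotProduct, Fin.sum_univ_four] <;>
    field_simp <;> ring

theorem splineMomentumMatrix_symplectic (h : ℝ) :
    (splineMomentumMatrix h).transpose * Jstd * splineMomentumMatrix h = Jstd := by
  ext i j
  fin_cases i <;> fin_cases j <;>
    simp [splineMomentumMatrix, Jstd, Matrix.mul_apply, Fin.sum_univ_four] <;> ring

/-- Symplecticity of the exact cubic-spline variational integrator. The map `T` given by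
the discrete flow is a linear isomorphism, and for `n = 1` the induced map
`(q_k, v_k, p_k, p̃_k) ↦ (q_{k+1}, v_{k+1}, p_{k+1}, p̃_{k+1})` (with the momenta defined
through the discrete Legendre transforms of `L_d^e`) is linear with symplectic matrix. -/
theorem exact_spline_integrator_symplectic (n : ℕ) (h : ℝ) (hh : 0 < h)
    (T : (EuclideanSpace ℝ (Fin n) × EuclideanSpace ℝ (Fin n)) ×
        EuclideanSpace ℝ (Fin n) × EuclideanSpace ℝ (Fin n) →
      (EuclideanSpace ℝ (Fin n) × EuclideanSpace ℝ (Fin n)) ×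
        EuclideanSpace ℝ (Fin n) × EuclideanSpace ℝ (Fin n))
    (hT : ∀ q₀ v₀ q₁ v₁ : EuclideanSpace ℝ (Fin n),
      T ((q₀, v₀), (q₁, v₁)) =
        ((q₁, v₁),
          ((5 : ℝ) • q₀ - (4 : ℝ) • q₁ + (2 * h) • (v₀ + (2 : ℝ) • v₁),
           v₀ + (2 / h) • (q₀ - (2 : ℝ) • q₁ +
             ((5 : ℝ) • q₀ - (4 : ℝ) • q₁ + (2 * h) • (v₀ + (2 : ℝ) • v₁)))))) :
    (IsLinearMap ℝ T ∧ Function.Bijective T) ∧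
    ∃ M : Matrix (Fin 4) (Fin 4) ℝ,
      (∀ q₀ v₀ q₁ v₁ : ℝ,
        M.mulVec
          ![q₀, v₀,
            -(deriv (fun x => LdeScalar h x v₀ q₁ v₁) q₀),
            -(deriv (fun x => LdeScalar h q₀ x q₁ v₁) v₀)] =
          ![q₁, v₁,
            deriv (fun x => LdeScalar h q₀ v₀ x v₁) q₁,
            deriv (fun x => LdeScalar h q₀ v₀ q₁ x) v₁]) ∧
      M.transpose * Jstd * M = Jstd := by
  have hT_eq : T = splineStep h := funext fun ⟨⟨q₀, v₀⟩, q₁, v₁⟩ => hT q₀ v₀ q₁ v₁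
  subst hT_eq
  exact ⟨⟨isLinearMap_splineStep h, splineStep_bijective hh.ne'⟩, splineMomentumMatrix h,
    splineMomentumMatrix_mulVec hh.ne', splineMomentumMatrix_symplectic h⟩
end
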